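/- Let k ∈ {1, 2, 3}, a > 0, c ≠ 0, σ ≤ μ, σ < −μ, and δ ∈ (0, |a/c|). If sup over û ∈ [−δ, −δμ/σ] of I(û, δ, |c|, k) is less than δ (i.e. P(δ,c,k) < δ), then sup over û ∈ [−δ, −δμ/σ] of I(û, δ, −|c|, k) is also less than δ. -/

import Mathlib

/-!
Write `J(r) = û e^{μr} + σ ∫_{-r}^0 e^{-μθ} η(θ) dθ`, so that `I(û, δ, ĉ, k) = J(a + ĉδ)` with
`η = η_{(k)}`. Formally `J'(r) = e^{μr} (μû + σ η(-r))`, and since every `η_{(k)}` is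
nondecreasing on `θ ≤ 0` and `σ < 0`, the bracket is nondecreasing in `r`: `J` can only fall and
then rise. Hence `J(a - |c|δ) ≤ max (J 0) (J (a + |c|δ)) = max û (J (a + |c|δ))`, and both terms
are below `δ` because `û ≤ -μδ/σ < δ` and `P(δ, c, k) < δ`. The monotonicity argument is run on
integrals rather than derivatives, since `η_{(1)}` jumps at `0`.
-/

/-- The constant `D₁ = (|μ|+|σ|)(1 + (|μ|+|σ|)|c|δ)`. -/
noncomputable def D1 (μ σ c δ : ℝ) : ℝ := (|μ| + |σ|) * (1 + (|μ| + |σ|) * |c| * δ)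

/-- The constant `D₂ = (D₁² + (|μ|+|σ|)³|c|δ)(1 + |σc|δ)`. -/
noncomputable def D2 (μ σ c δ : ℝ) : ℝ :=
  ((D1 μ σ c δ) ^ 2 + (|μ| + |σ|) ^ 3 * |c| * δ) * (1 + |σ * c| * δ)

/-- The profile `η̄` used to define `η_{(3)}`. -/
noncomputable def etabar (δ d1 d2 s : ℝ) : ℝ :=
  if s ≤ 0 then -δ
  else if s < d1 / d2 then -δ + δ * d2 / 2 * s ^ 2
  else -δ - δ * d1 ^ 2 / (2 * d2) + δ * d1 * s

/-- The shift `θ_shift` used to define `η_{(3)}`. -/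
noncomputable def thetaShift (δ d1 d2 uh : ℝ) : ℝ :=
  if uh ≤ -δ + δ * d1 ^ 2 / (2 * d2) then Real.sqrt (2 * (uh + δ) / (d2 * δ))
  else (uh + δ + δ * d1 ^ 2 / (2 * d2)) / (d1 * δ)

/-- The extremal forcing functions `η_{(k)}` for `k = 1, 2, 3`. -/
noncomputable def etaK (μ σ c δ uh : ℝ) : ℕ → ℝ → ℝ
  | 1, θ => if θ < 0 then -δ else uh
  | 2, θ => max (uh + D1 μ σ c δ * δ * θ) (-δ)
  | 3, θ => etabar δ (D1 μ σ c δ) (D2 μ σ c δ)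
      (θ + thetaShift δ (D1 μ σ c δ) (D2 μ σ c δ) uh)
  | _, _ => 0

/-- `I(û, δ, ĉ, k) = û e^{μ(a+ĉδ)} + σ ∫_{-(a+ĉδ)}^{0} e^{-μθ} η_{(k)}(θ) dθ`
(the constants `D₁, D₂` in `η_{(k)}` are computed from `|c|`, while `ĉ` only enters
the integration limits). -/
noncomputable def Ifun (μ σ c a δ chat uh : ℝ) (k : ℕ) : ℝ :=
  uh * Real.exp (μ * (a + chat * δ)) +
    σ * ∫ θ in (-(a + chat * δ))..(0 : ℝ), Real.exp (-μ * θ) * etaK μ σ c δ uh k θ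

/-- `P(δ, c, k) = sup_{û ∈ [-δ, -μδ/σ]} I(û, δ, |c|, k)`. -/
noncomputable def Pfun (μ σ c a δ : ℝ) (k : ℕ) : ℝ :=
  sSup ((fun uh => Ifun μ σ c a δ |c| uh k) '' Set.Icc (-δ) (-μ * δ / σ))

/-- `r = a + |c|δ`. -/
noncomputable def rr (a c δ : ℝ) : ℝ := a + |c| * δ

/-- The explicit one-piece integral `I₁(û, δ)` (for `μ ≠ 0`). -/
noncomputable def I1fun (μ σ c a δ uh : ℝ) : ℝ :=
  uh * (Real.exp (μ * rr a c δ) + σ / μ * (Real.exp (μ * rr a c δ) - 1)) +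
    σ / μ * D1 μ σ c δ * δ *
      (1 / μ * (Real.exp (μ * rr a c δ) - 1) - rr a c δ * Real.exp (μ * rr a c δ))

/-- The explicit two-piece integral `I₂(û, δ)` (for `μ ≠ 0`). -/
noncomputable def I2fun (μ σ c a δ uh : ℝ) : ℝ :=
  uh * (Real.exp (μ * rr a c δ) - σ / μ) +
    σ / μ * δ * (D1 μ σ c δ / μ *
      (Real.exp (μ * (δ + uh) / (D1 μ σ c δ * δ)) - 1) - Real.exp (μ * rr a c δ))
open MeasureTheory Set Real

section Etabar

variable {δ d1 d2 : ℝ}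

lemma etabar_of_nonpos {s : ℝ} (hs : s ≤ 0) : etabar δ d1 d2 s = -δ := if_pos hs

lemma etabar_of_mem_Icc {s : ℝ} (hs : s ∈ Icc 0 (d1 / d2)) :
    etabar δ d1 d2 s = -δ + δ * d2 / 2 * s ^ 2 := by
  obtain ⟨hs0, hsq⟩ := hs
  rcases hs0.eq_or_lt with rfl | hs0
  · simp [etabar]
  rcases hsq.lt_or_eq with hsq | rfl
  · rw [etabar, if_neg hs0.not_ge, if_pos hsq]
  · have hd2 : d2 ≠ 0 := by rintro rfl; simp at hs0
    rw [etabar, if_neg hs0.not_ge, if_neg (lt_irrefl _)]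
    field_simp
    ring

lemma etabar_of_ge (hd1 : 0 < d1) (hd2 : 0 < d2) {s : ℝ} (hs : d1 / d2 ≤ s) :
    etabar δ d1 d2 s = -δ - δ * d1 ^ 2 / (2 * d2) + δ * d1 * s := by
  have hs0 : 0 < s := (div_pos hd1 hd2).trans_le hs
  rw [etabar, if_neg hs0.not_ge, if_neg hs.not_gt]

lemma etabar_monotone (hδ : 0 ≤ δ) (hd1 : 0 < d1) (hd2 : 0 < d2) :
    Monotone (etabar δ d1 d2) := by
  have hq : 0 ≤ d1 / d2 := (div_pos hd1 hd2).le
  refine MonotoneOn.Iic_union_Ici (a := 0) ?_ ?_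
  · intro s hs t ht _
    rw [etabar_of_nonpos hs, etabar_of_nonpos ht]
  rw [← Icc_union_Ici_eq_Ici hq]
  refine MonotoneOn.union_right ?_ ?_ (isGreatest_Icc hq) isLeast_Ici
  · intro s hs t ht hst
    rw [etabar_of_mem_Icc hs, etabar_of_mem_Icc ht]
    gcongr
    exact hs.1
  · intro s hs t ht hst
    rw [etabar_of_ge hd1 hd2 hs, etabar_of_ge hd1 hd2 ht]
    gcongr

lemma neg_le_etabar (hδ : 0 ≤ δ) (hd1 : 0 < d1) (hd2 : 0 < d2) (s : ℝ) :
    -δ ≤ etabar δ d1 d2 s := by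
  rcases le_total s 0 with hs | hs
  · exact (etabar_of_nonpos hs).ge
  · exact (etabar_of_nonpos le_rfl).symm.le.trans (etabar_monotone hδ hd1 hd2 hs)

lemma etabar_thetaShift (hδ : 0 < δ) (hd1 : 0 < d1) (hd2 : 0 < d2) {u : ℝ} (hu : -δ ≤ u) :
    etabar δ d1 d2 (thetaShift δ d1 d2 u) = u := by
  rw [thetaShift]
  split_ifs with hlow
  · have harg : 0 ≤ 2 * (u + δ) / (d2 * δ) := by
      apply div_nonneg <;> nlinarith
    have hle : √(2 * (u + δ) / (d2 * δ)) ≤ d1 / d2 := by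
      rw [sqrt_le_left (div_pos hd1 hd2).le, div_le_iff₀ (by positivity)]
      field_simp
      linarith [(le_div_iff₀ (by positivity)).1 (show u + δ ≤ δ * d1 ^ 2 / (2 * d2) by linarith)]
    rw [etabar_of_mem_Icc ⟨sqrt_nonneg _, hle⟩, sq_sqrt harg]
    field_simp
    ring
  · push Not at hlow
    have hge : d1 / d2 ≤ (u + δ + δ * d1 ^ 2 / (2 * d2)) / (d1 * δ) := by
      rw [div_le_div_iff₀ hd2 (by positivity)]
      field_simp
      linarith [(div_lt_iff₀ (by positivity)).1 (show δ * d1 ^ 2 / (2 * d2) < u + δ by linarith)]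
    rw [etabar_of_ge hd1 hd2 hge]
    field_simp
    ring

end Etabar

lemma D1_pos {μ σ c δ : ℝ} (hσ : σ ≠ 0) (hδ : 0 ≤ δ) : 0 < D1 μ σ c δ := by
  have : 0 < |μ| + |σ| := by positivity
  unfold D1
  positivity

lemma D2_pos {μ σ c δ : ℝ} (hσ : σ ≠ 0) (hδ : 0 ≤ δ) : 0 < D2 μ σ c δ := by
  have := D1_pos (μ := μ) (c := c) hσ hδ
  unfold D2
  positivity

section EtaK

variable {μ σ c δ u : ℝ} {k : ℕ}

lemma etaK_monotoneOn (hσ : σ ≠ 0) (hδ : 0 < δ) (hu : -δ ≤ u) (hk : k = 1 ∨ k = 2 ∨ k = 3) :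
    MonotoneOn (etaK μ σ c δ u k) (Iic 0) := by
  intro θ₁ _ θ₂ hθ₂ h12
  rcases hk with rfl | rfl | rfl <;> simp only [etaK]
  · split_ifs <;> linarith
  · have := D1_pos (μ := μ) (c := c) hσ hδ.le
    gcongr
  · exact etabar_monotone hδ.le (D1_pos hσ hδ.le) (D2_pos hσ hδ.le) (by linarith)

lemma etaK_zero (hσ : σ ≠ 0) (hδ : 0 < δ) (hu : -δ ≤ u) (hk : k = 1 ∨ k = 2 ∨ k = 3) :
    etaK μ σ c δ u k 0 = u := by
  rcases hk with rfl | rfl | rfl <;> simp only [etaK]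
  · simp
  · simpa using hu
  · rw [zero_add, etabar_thetaShift hδ (D1_pos hσ hδ.le) (D2_pos hσ hδ.le) hu]

lemma neg_le_etaK (hσ : σ ≠ 0) (hδ : 0 < δ) (hu : -δ ≤ u) (hk : k = 1 ∨ k = 2 ∨ k = 3)
    (θ : ℝ) : -δ ≤ etaK μ σ c δ u k θ := by
  rcases hk with rfl | rfl | rfl <;> simp only [etaK]
  · split_ifs <;> linarith
  · exact le_max_right _ _
  · exact neg_le_etabar hδ.le (D1_pos hσ hδ.le) (D2_pos hσ hδ.le) _

lemma abs_etaK_le (hσ : σ ≠ 0) (hδ : 0 < δ) (hu : u ∈ Icc (-δ) δ) (hk : k = 1 ∨ k = 2 ∨ k = 3)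
    {θ : ℝ} (hθ : θ ≤ 0) : |etaK μ σ c δ u k θ| ≤ δ := by
  refine abs_le.2 ⟨neg_le_etaK hσ hδ hu.1 hk θ, ?_⟩
  calc etaK μ σ c δ u k θ ≤ etaK μ σ c δ u k 0 :=
        etaK_monotoneOn hσ hδ hu.1 hk hθ (mem_Iic.2 le_rfl) hθ
    _ = u := etaK_zero hσ hδ hu.1 hk
    _ ≤ δ := hu.2

end EtaK

lemma integral_mul_exp_neg_mul (μ a b : ℝ) :
    ∫ θ in a..b, μ * exp (-μ * θ) = exp (-μ * a) - exp (-μ * b) := by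
  have hderiv (θ : ℝ) : HasDerivAt (fun x => -exp (-μ * x)) (μ * exp (-μ * θ)) θ := by
    refine ((hasDerivAt_id θ).const_mul (-μ)).exp.neg.congr_deriv ?_
    simp only [id, mul_one]
    ring
  rw [intervalIntegral.integral_eq_sub_of_hasDerivAt (fun θ _ => hderiv θ)
    ((by fun_prop : Continuous fun θ => μ * exp (-μ * θ)).intervalIntegrable _ _)]
  ring

lemma integral_mul_nonneg_of_antitoneOn_of_integral_pos {w g : ℝ → ℝ} {a b c : ℝ}
    (hab : a ≤ b) (hbc : b ≤ c) (hw : ∀ x ∈ Icc a c, 0 ≤ w x) (hg : AntitoneOn g (Icc a c))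
    (hpos : 0 < ∫ x in b..c, w x * g x) : 0 ≤ ∫ x in a..b, w x * g x := by
  have hb : b ∈ Icc a c := ⟨hab, hbc⟩
  have hgb : 0 < g b := by
    by_contra! hgb
    have : ∫ x in b..c, w x * g x ≤ 0 := by
      rw [← neg_nonneg, ← intervalIntegral.integral_neg]
      refine intervalIntegral.integral_nonneg hbc fun x hx => ?_
      have hx' : x ∈ Icc a c := ⟨hab.trans hx.1, hx.2⟩
      nlinarith [hw x hx', hg hb hx' hx.1]
    linarith
  refine intervalIntegral.integral_nonneg hab fun x hx => ?_
  have hx' : x ∈ Icc a c := ⟨hx.1, hx.2.trans hbc⟩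
  exact mul_nonneg (hw x hx') (hgb.le.trans (hg hx' hb hx.2))

/-- `Ifun μ σ c a δ ĉ û k` unfolds to `expResponse μ σ û (etaK μ σ c δ û k) (a + ĉ * δ)`;
the main theorem uses this definitionally. -/
noncomputable def expResponse (μ σ u : ℝ) (η : ℝ → ℝ) (r : ℝ) : ℝ :=
  u * exp (μ * r) + σ * ∫ θ in (-r)..0, exp (-μ * θ) * η θ

section ExpResponse

variable {μ σ u : ℝ} {η : ℝ → ℝ}

lemma expResponse_zero : expResponse μ σ u η 0 = u := by
  simp [expResponse]

lemma expResponse_sub_expResponse {s t : ℝ}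
    (hts : IntervalIntegrable (fun θ => exp (-μ * θ) * η θ) volume (-t) (-s))
    (hs0 : IntervalIntegrable (fun θ => exp (-μ * θ) * η θ) volume (-s) 0) :
    expResponse μ σ u η t - expResponse μ σ u η s =
      ∫ θ in (-t)..(-s), exp (-μ * θ) * (μ * u + σ * η θ) := by
  have hexp : ∫ θ in (-t)..(-s), exp (-μ * θ) * (μ * u + σ * η θ) =
      u * (∫ θ in (-t)..(-s), μ * exp (-μ * θ)) + σ * ∫ θ in (-t)..(-s), exp (-μ * θ) * η θ := by
    rw [← intervalIntegral.integral_const_mul, ← intervalIntegral.integral_const_mul,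
      ← intervalIntegral.integral_add
      ((by fun_prop : Continuous fun θ => u * (μ * exp (-μ * θ))).intervalIntegrable _ _)
      (hts.const_mul σ)]
    congr 1 with θ
    ring
  rw [hexp, integral_mul_exp_neg_mul, expResponse, expResponse,
    ← intervalIntegral.integral_add_adjacent_intervals hts hs0, neg_mul_neg, neg_mul_neg]
  ring

lemma expResponse_le_max {s t : ℝ} (hσ : σ ≤ 0) (hη : MonotoneOn η (Icc (-t) 0))
    (hs : 0 ≤ s) (hst : s ≤ t) :
    expResponse μ σ u η s ≤ max u (expResponse μ σ u η t) := by
  have hint {x y : ℝ} (hx : x ∈ Icc (-t) 0) (hy : y ∈ Icc (-t) 0) :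
      IntervalIntegrable (fun θ => exp (-μ * θ) * η θ) volume x y :=
    (hη.mono (uIcc_subset_Icc hx hy)).intervalIntegrable.continuousOn_mul (by fun_prop)
  have ht : -t ∈ Icc (-t) 0 := ⟨le_rfl, by linarith⟩
  have hs' : -s ∈ Icc (-t) 0 := ⟨by linarith, by linarith⟩
  have h0 : (0 : ℝ) ∈ Icc (-t) 0 := ⟨by linarith, le_rfl⟩
  have hg : AntitoneOn (fun θ => μ * u + σ * η θ) (Icc (-t) 0) := fun x hx y hy hxy => by
    simpa using mul_le_mul_of_nonpos_left (hη hx hy hxy) hσ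
  rcases le_or_gt (expResponse μ σ u η s) u with hle | hgt
  · exact le_max_of_le_left hle
  have h0' : -0 ∈ Icc (-t) 0 := by simpa using h0
  have hrise := expResponse_sub_expResponse (σ := σ) (u := u) (hint hs' h0') (hint h0' h0)
  rw [neg_zero, expResponse_zero] at hrise
  refine le_max_of_le_right (sub_nonneg.1 ?_)
  rw [expResponse_sub_expResponse (hint ht hs') (hint hs' h0)]
  exact integral_mul_nonneg_of_antitoneOn_of_integral_pos (by linarith) (by linarith)
    (fun x _ => (exp_pos _).le) hg (by linarith)

lemma abs_expResponse_le {r M : ℝ} (hr : 0 ≤ r) (hη : ∀ θ ∈ Icc (-r) 0, |η θ| ≤ M) :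
    |expResponse μ σ u η r| ≤ (|u| + |σ| * M * r) * exp (|μ| * r) := by
  have hexp {θ : ℝ} (hθ : θ ∈ Icc (-r) 0) : exp (-μ * θ) ≤ exp (|μ| * r) := by
    refine exp_le_exp.2 ?_
    calc -μ * θ = μ * -θ := by ring
      _ ≤ |μ| * -θ := mul_le_mul_of_nonneg_right (le_abs_self μ) (by linarith [hθ.2])
      _ ≤ |μ| * r := mul_le_mul_of_nonneg_left (by linarith [hθ.1]) (abs_nonneg μ)
  have hint : |∫ θ in (-r)..0, exp (-μ * θ) * η θ| ≤ exp (|μ| * r) * M * r := by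
    have := intervalIntegral.norm_integral_le_of_norm_le_const
      (a := -r) (b := 0) (f := fun θ => exp (-μ * θ) * η θ) (C := exp (|μ| * r) * M) fun θ hθ => by
        rw [uIoc_of_le (by linarith)] at hθ
        rw [norm_mul, Real.norm_of_nonneg (exp_pos _).le, Real.norm_eq_abs]
        exact mul_le_mul (hexp (Ioc_subset_Icc_self hθ)) (hη θ (Ioc_subset_Icc_self hθ))
          (abs_nonneg _) (exp_pos _).le
    simpa [abs_of_nonneg hr] using this
  calc |expResponse μ σ u η r|
      ≤ |u| * exp (μ * r) + |σ| * |∫ θ in (-r)..0, exp (-μ * θ) * η θ| := by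
        refine (abs_add_le _ _).trans_eq ?_
        rw [abs_mul, abs_mul, abs_of_pos (exp_pos _)]
    _ ≤ |u| * exp (|μ| * r) + |σ| * (exp (|μ| * r) * M * r) := by
        gcongr
        exact le_abs_self μ
    _ = (|u| + |σ| * M * r) * exp (|μ| * r) := by ring

end ExpResponse

/-- Lemma 4.6 of Humphries–Magpantay: if the supremum with integration
length `a + |c|δ` is below `δ`, so is the supremum with integration length `a - |c|δ`. -/
theorem stmt_12 (k : ℕ) (hk : k = 1 ∨ k = 2 ∨ k = 3)
    (μ σ c a δ : ℝ) (ha : 0 < a) (hc : c ≠ 0)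
    (h1 : σ ≤ μ) (h2 : σ < -μ)
    (hδ0 : 0 < δ) (hδ1 : δ < |a / c|)
    (hP : Pfun μ σ c a δ k < δ) :
    sSup ((fun uh => Ifun μ σ c a δ (-|c|) uh k) '' Set.Icc (-δ) (-μ * δ / σ)) < δ := by
  have hσ : σ < 0 := by linarith
  have hlo : -δ ≤ -μ * δ / σ := by rw [le_div_iff_of_neg hσ]; nlinarith
  have hhi : -μ * δ / σ < δ := by rw [div_lt_iff_of_neg hσ]; nlinarith
  have hcδ : |c| * δ < a := by
    rw [abs_div, abs_of_pos ha, lt_div_iff₀ (abs_pos.2 hc)] at hδ1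
    linarith
  have hU : Icc (-δ) (-μ * δ / σ) ⊆ Icc (-δ) δ := Icc_subset_Icc_right hhi.le
  have hbdd : BddAbove ((fun uh => Ifun μ σ c a δ |c| uh k) '' Icc (-δ) (-μ * δ / σ)) := by
    refine ⟨(δ + |σ| * δ * (a + |c| * δ)) * exp (|μ| * (a + |c| * δ)), ?_⟩
    rintro _ ⟨uh, huh, rfl⟩
    refine (le_abs_self _).trans ((abs_expResponse_le (by positivity)
      fun θ hθ => abs_etaK_le hσ.ne hδ0 (hU huh) hk hθ.2).trans ?_)
    gcongr
    exact abs_le.2 (hU huh)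
  refine (csSup_le ((nonempty_Icc.2 hlo).image _) ?_).trans_lt (max_lt hhi hP)
  rintro _ ⟨uh, huh, rfl⟩
  calc Ifun μ σ c a δ (-|c|) uh k ≤ max uh (Ifun μ σ c a δ |c| uh k) :=
        expResponse_le_max hσ.le ((etaK_monotoneOn hσ.ne hδ0 huh.1 hk).mono fun θ hθ => hθ.2)
          (by linarith) (by nlinarith [abs_nonneg c])
    _ ≤ max (-μ * δ / σ) (Pfun μ σ c a δ k) :=
        max_le_max huh.2 (le_csSup hbdd (mem_image_of_mem _ huh))
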